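/- arXiv:0706.1588 — 7 statements merged into one kernel-verified Lean document; each statement's English description precedes it below -/
import Mathlib

section
/- Let Σ be a positive-definite n×n covariance matrix of a Gaussian vector whose dependency graph G = (V,E) is acyclic (i.e., the inverse A = Σ⁻¹ satisfies A(i,j) = 0 iff (i,j) ∉ E for i ≠ j, and G is a forest). Then for any vertex i with degree at least 2 and any two distinct neighbors j, k of i, one has Σ(j,k) = Σ(i,j)·Σ(i,k)/Σ(i,i). -/
/-!
With `A = Σ⁻¹` and `w = Σ (Σ(i,i) e_j - Σ(i,j) e_i)` we have `w l = Σ(i,i) Σ(l,j) - Σ(i,j) Σ(l,i)`,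
`w i = 0` and `A w = Σ(i,i) e_j - Σ(i,j) e_i`. Let `C` be the set of vertices reachable from `k`
without passing through `i`; in a forest `j ∉ C`, so `A w` vanishes on `C`. As `A` links `C` only
to `C ∪ {i}` and `w i = 0`, the restriction `z` of `w` to `C` satisfies `A z = A w = 0` on `C`.
Then `zᵀ A z = 0`, so `z = 0` by positive definiteness, and `w k = 0` is the claim.
-/

namespace SimpleGraph

variable {V : Type*} {G : SimpleGraph V}

theorem IsAcyclic.mem_support_of_adj_of_adj (hG : G.IsAcyclic) {i j k : V}
    (hj : G.Adj i j) (hk : G.Adj i k) (hjk : j ≠ k) (p : G.Walk k j) : i ∈ p.support := by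
  have hmem := isBridge_iff_forall_walk_mem_edges.mp
    (isAcyclic_iff_forall_adj_isBridge.mp hG hj) (p.cons hk)
  rw [Walk.edges_cons, List.mem_cons] at hmem
  rcases hmem with h | h
  · simp only [Sym2.eq, Sym2.rel_iff', Prod.mk.injEq, Prod.swap_prod_mk] at h
    rcases h with ⟨-, rfl⟩ | ⟨rfl, rfl⟩ <;> exact absurd rfl hjk
  · exact p.fst_mem_support_of_mem_edges h

variable (G) in
/-- Vertices joined to `k` by a walk that does not visit `i`. -/
def reachableAvoiding (i k : V) : Set V := {l | ∃ p : G.Walk k l, i ∉ p.support}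

theorem start_mem_reachableAvoiding {i k : V} (h : k ≠ i) : k ∈ G.reachableAvoiding i k :=
  ⟨.nil, by simpa using h.symm⟩

theorem ne_of_mem_reachableAvoiding {i k l : V} (hl : l ∈ G.reachableAvoiding i k) : l ≠ i := by
  obtain ⟨p, hp⟩ := hl
  rintro rfl
  exact hp p.end_mem_support

theorem mem_reachableAvoiding_of_adj {i k l m : V} (hl : l ∈ G.reachableAvoiding i k)
    (hlm : G.Adj l m) (hm : m ≠ i) : m ∈ G.reachableAvoiding i k := by
  obtain ⟨p, hp⟩ := hl
  refine ⟨p.concat hlm, ?_⟩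
  rw [Walk.support_concat, List.mem_append, List.mem_singleton]
  rintro (h | rfl)
  exacts [hp h, hm rfl]

end SimpleGraph

namespace Matrix

variable {ι R : Type*} [Fintype ι]

theorem PosDef.eq_zero_of_mulVec_eq_zero_on [Ring R] [PartialOrder R] [StarRing R]
    {A : Matrix ι ι R} (hA : A.PosDef) {C : Set ι} {w : ι → R}
    (hAw : ∀ l ∈ C, (A *ᵥ w) l = 0) (hcut : ∀ l ∈ C, ∀ m ∉ C, A l m * w m = 0)
    {l : ι} (hl : l ∈ C) : w l = 0 := by
  classical
  set z := C.indicator w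
  have hAz : ∀ l ∈ C, (A *ᵥ z) l = 0 := by
    intro l hl
    rw [← hAw l hl]
    refine Finset.sum_congr rfl fun m _ => ?_
    by_cases hm : m ∈ C
    · simp [z, hm]
    · simp [z, hm, hcut l hl m hm]
  have hz : z = 0 := by
    by_contra hne
    refine (hA.dotProduct_mulVec_pos hne).ne' (Finset.sum_eq_zero fun m _ => ?_)
    by_cases hm : m ∈ C
    · simp [hAz m hm]
    · simp [z, hm]
  simpa [z, hl] using congrFun hz l

theorem PosDef.apply_mul_apply_eq_of_forall_walk_mem_support {K V : Type*} [Field K]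
    [PartialOrder K] [StarRing K] [Fintype V] [DecidableEq V] {S : Matrix V V K} (hS : S.PosDef)
    {G : SimpleGraph V} (hG : ∀ l m, l ≠ m → S⁻¹ l m ≠ 0 → G.Adj l m) {i j k : V}
    (hsep : ∀ p : G.Walk k j, i ∈ p.support) : S i i * S k j = S i j * S k i := by
  by_cases hki : k = i
  · subst hki; ring
  set C := G.reachableAvoiding i k
  have hjC : j ∉ C := fun ⟨p, hp⟩ => hp (hsep p)
  set u : V → K := S i i • Pi.single j 1 - S i j • Pi.single i 1
  have hw : ∀ l, (S *ᵥ u) l = S i i * S l j - S i j * S l i := by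
    simp [u, mulVec_sub, mulVec_smul]
  have hAw : S⁻¹ *ᵥ (S *ᵥ u) = u := by
    rw [mulVec_mulVec, nonsing_inv_mul S ((isUnit_iff_isUnit_det S).mp hS.isUnit), one_mulVec]
  have hwk := hS.inv.eq_zero_of_mulVec_eq_zero_on (C := C) (w := S *ᵥ u) ?_ ?_
    (SimpleGraph.start_mem_reachableAvoiding hki)
  · rwa [hw, sub_eq_zero] at hwk
  · intro l hl
    have hlj : l ≠ j := fun h => hjC (h ▸ hl)
    simp [hAw, u, hlj, SimpleGraph.ne_of_mem_reachableAvoiding hl]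
  · intro l hl m hm
    by_cases hmi : m = i
    · simp [hmi, hw, mul_comm]
    · have hlm : S⁻¹ l m = 0 := by
        by_contra h
        exact hm (SimpleGraph.mem_reachableAvoiding_of_adj hl
          (hG l m (fun e => hm (e ▸ hl)) h) hmi)
      simp [hlm]

end Matrix

theorem stmt_0 {n : ℕ} (S : Matrix (Fin n) (Fin n) ℝ)
    (hsymm : S.IsSymm) (hpd : S.PosDef)
    (G : SimpleGraph (Fin n)) (hac : G.IsAcyclic)
    (hE : ∀ i j : Fin n, i ≠ j → (G.Adj i j ↔ S⁻¹ i j ≠ 0))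
    (i j k : Fin n) (hj : G.Adj i j) (hk : G.Adj i k) (hjk : j ≠ k) :
    S j k = S i j * S i k / S i i := by
  have key := hpd.apply_mul_apply_eq_of_forall_walk_mem_support
    (fun l m hlm h => (hE l m hlm).mpr h) (hac.mem_support_of_adj_of_adj hj hk hjk)
  rw [hsymm.apply j k, hsymm.apply i k] at key
  rw [eq_div_iff hpd.diag_pos.ne']
  linear_combination key
end

section
/- Let V ⊂ ℝ² be a finite set of points with pairwise distinct inter-point distances, |V| ≥ 2. Define for each i ∈ V its nearest neighbor nn(i) = argmin_{j ≠ i} dist(i,j). Then the undirected nearest-neighbor graph, with edge (i,j) iff i = nn(j) or j = nn(i), is acyclic. -/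
/-!
In a cycle of the nearest-neighbour graph take a longest edge `{a, b}`, oriented so that
`b = nn a`. The other cycle edge `{a, c}` at `a` is no longer than `{a, b}` by maximality and no
shorter because `b` is nearest to `a`; so `a` is equidistant from `b ≠ c`, which distinct
distances forbid.
-/

open SimpleGraph

theorem SimpleGraph.Walk.IsCycle.exists_mem_edges_ne {V : Type*} {G : SimpleGraph V} {u x : V}
    {p : G.Walk u u} (hp : p.IsCycle) (hx : x ∈ p.support) (y : V) :
    ∃ z ≠ y, s(x, z) ∈ p.edges := by
  obtain ⟨z, hz, hzy⟩ := Set.exists_ne_of_one_lt_ncard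
    (by rw [hp.ncard_neighborSet_toSubgraph_eq_two hx]; norm_num) y
  exact ⟨z, hzy, Walk.adj_toSubgraph_iff_mem_edges.mp hz⟩

theorem List.exists_mem_forall_dist_le {α : Type*} [PseudoMetricSpace α] {l : List (Sym2 α)}
    (hl : l ≠ []) : ∃ a b, s(a, b) ∈ l ∧ ∀ x y, s(x, y) ∈ l → dist x y ≤ dist a b := by
  classical
  obtain ⟨e, he, hmax⟩ := l.toFinset.exists_max_image (Sym2.lift ⟨dist, dist_comm⟩)
    (List.toFinset_nonempty_iff l |>.mpr hl)
  induction e using Sym2.ind with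
  | _ a b =>
    exact ⟨a, b, List.mem_toFinset.mp he, fun x y hxy => hmax _ (List.mem_toFinset.mpr hxy)⟩

theorem isAcyclic_fromRel_nearestNeighbor {α : Type*} [PseudoMetricSpace α]
    (f : α → α) (hf : ∀ a b : α, b ≠ a → dist a (f a) ≤ dist a b)
    (hinj : ∀ a b c : α, a ≠ b → a ≠ c → dist a b = dist a c → b = c) :
    (fromRel fun a b => f a = b).IsAcyclic := by
  intro v p hp
  obtain ⟨a, b, hab, hmax⟩ :=
    List.exists_mem_forall_dist_le (Walk.edges_eq_nil.not.mpr hp.not_nil)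
  wlog hfab : f a = b generalizing a b
  · have hba := ((fromRel_adj _ a b).mp (p.adj_of_mem_edges hab)).2.resolve_left hfab
    exact this b a (Sym2.eq_swap ▸ hab) (fun x y hxy => dist_comm a b ▸ hmax x y hxy) hba
  obtain ⟨c, hcb, hac⟩ := hp.exists_mem_edges_ne (p.fst_mem_support_of_mem_edges hab) b
  have hab' : a ≠ b := (p.adj_of_mem_edges hab).ne
  have hac' : a ≠ c := (p.adj_of_mem_edges hac).ne
  exact hcb (hinj a c b hac' hab' (le_antisymm (hmax a c hac) (hfab ▸ hf a c hac'.symm)))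

theorem stmt_4_general (V : Finset (EuclideanSpace ℝ (Fin 2)))
    (hdist : ∀ i ∈ V, ∀ j ∈ V, ∀ k ∈ V, ∀ l ∈ V,
      i ≠ j → k ≠ l → dist i j = dist k l → (i = k ∧ j = l) ∨ (i = l ∧ j = k))
    (nn : EuclideanSpace ℝ (Fin 2) → EuclideanSpace ℝ (Fin 2))
    (hnn : ∀ i ∈ V, nn i ∈ V ∧ nn i ≠ i ∧
      ∀ j ∈ V, j ≠ i → dist i (nn i) ≤ dist i j) :
    (SimpleGraph.fromRel (fun a b : {x // x ∈ V} => nn a.1 = b.1)).IsAcyclic := by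
  let f : V → V := fun a => ⟨nn a, (hnn a a.2).1⟩
  have hgraph : fromRel (fun a b : V => nn a.1 = b.1) = fromRel fun a b => f a = b := by
    simp only [f, Subtype.ext_iff]
  rw [hgraph]
  refine isAcyclic_fromRel_nearestNeighbor f
    (fun a b hba => (hnn a a.2).2.2 b b.2 (Subtype.coe_ne_coe.mpr hba)) ?_
  intro a b c hab hac h
  have hpair := hdist a a.2 b b.2 a a.2 c c.2
    (Subtype.coe_ne_coe.mpr hab) (Subtype.coe_ne_coe.mpr hac) h
  exact Subtype.ext (hpair.elim And.right fun h' => absurd h'.1 (Subtype.coe_ne_coe.mpr hac))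

theorem stmt_4 (V : Finset (EuclideanSpace ℝ (Fin 2))) (hV : 2 ≤ V.card)
    (hdist : ∀ i ∈ V, ∀ j ∈ V, ∀ k ∈ V, ∀ l ∈ V,
      i ≠ j → k ≠ l → dist i j = dist k l → (i = k ∧ j = l) ∨ (i = l ∧ j = k))
    (nn : EuclideanSpace ℝ (Fin 2) → EuclideanSpace ℝ (Fin 2))
    (hnn : ∀ i ∈ V, nn i ∈ V ∧ nn i ≠ i ∧
      ∀ j ∈ V, j ≠ i → dist i (nn i) ≤ dist i j) :
    (SimpleGraph.fromRel (fun a b : {x // x ∈ V} => nn a.1 = b.1)).IsAcyclic :=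
  stmt_4_general V hdist nn hnn
end

section
/- Let V ⊂ ℝ² be finite with |V| ≥ 2 and pairwise distinct inter-point distances. In the directed nearest-neighbor graph with edge set {⟨i, nn(i)⟩ : i ∈ V}, every weakly connected component contains exactly one 2-cycle, i.e., exactly one unordered pair {i,j} with nn(i) = j and nn(j) = i. -/
/-!
Following nearest neighbours never increases the edge length, and with distinct distances it
strictly decreases it unless the step closes a 2-cycle. So the point of least edge length
reachable from any point lies on a 2-cycle. Conversely, whether some iterate of a point hits a
point `z` of a 2-cycle does not change along an edge of the functional graph, so every point
of the component of `z`, in particular any other 2-cycle there, eventually reaches `z`; an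
orbit that starts on a 2-cycle never leaves it, so the two 2-cycles coincide.
-/

namespace Function

variable {α : Type*} {f : α → α}

theorem iterate_eq_or_eq_apply_of_apply_apply {z : α} (hz : f (f z) = z) (n : ℕ) :
    f^[n] z = z ∨ f^[n] z = f z := by
  induction n with
  | zero => exact Or.inl rfl
  | succ n ih =>
    rw [iterate_succ_apply']
    rcases ih with h | h <;> rw [h]
    exacts [Or.inr rfl, Or.inl hz]

theorem exists_iterate_eq_iff_exists_iterate_apply_eq {z a : α} (hz : f (f z) = z) :
    (∃ n, f^[n] a = z) ↔ ∃ n, f^[n] (f a) = z := by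
  constructor
  · rintro ⟨_ | n, rfl⟩
    exacts [⟨1, hz⟩, ⟨n, rfl⟩]
  · rintro ⟨n, hn⟩
    exact ⟨n + 1, hn⟩

end Function

namespace SimpleGraph

open Function

variable {α : Type*}

def fromFun (f : α → α) : SimpleGraph α :=
  fromRel fun a b => f a = b

variable (f : α → α)

theorem fromFun_reachable_apply (x : α) : (fromFun f).Reachable x (f x) := by
  by_cases h : x = f x
  · rw [← h]
  · exact Adj.reachable ((fromRel_adj _ _ _).mpr ⟨h, Or.inl rfl⟩)

variable {f}

theorem fromFun_exists_iterate_eq_of_reachable {z x y : α} (hz : f (f z) = z)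
    (h : (fromFun f).Reachable x y) (hx : ∃ n, f^[n] x = z) : ∃ n, f^[n] y = z := by
  obtain ⟨w⟩ := h
  induction w with
  | nil => exact hx
  | cons hadj _ ih =>
    apply ih
    rcases ((fromRel_adj _ _ _).mp hadj).2 with rfl | rfl
    exacts [(exists_iterate_eq_iff_exists_iterate_apply_eq hz).mp hx,
      (exists_iterate_eq_iff_exists_iterate_apply_eq hz).mpr hx]

theorem fromFun_eq_or_eq_apply_of_reachable {z z' : α} (hz : f (f z) = z) (hz' : f (f z') = z')
    (h : (fromFun f).Reachable z z') : z' = z ∨ z' = f z := by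
  obtain ⟨n, hn⟩ := fromFun_exists_iterate_eq_of_reachable hz h ⟨0, rfl⟩
  rcases iterate_eq_or_eq_apply_of_apply_apply hz' n with h | h <;> rw [hn] at h
  · exact Or.inl h.symm
  · rw [h, hz']
    exact Or.inr rfl

theorem fromFun_exists_reachable_apply_apply_eq {β : Type*} [Finite α] [LinearOrder β]
    (w : α → β) (hw : ∀ x, f (f x) ≠ x → w (f x) < w x) (x : α) :
    ∃ z, f (f z) = z ∧ (fromFun f).Reachable x z := by
  obtain ⟨z, hxz, hmin⟩ :=
    Set.exists_min_image {y | (fromFun f).Reachable x y} w (Set.toFinite _) ⟨x, Reachable.refl x⟩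
  refine ⟨z, ?_, hxz⟩
  by_contra hz
  exact (hw z hz).not_ge (hmin _ (Reachable.trans hxz (fromFun_reachable_apply f z)))

theorem fromFun_connectedComponent_exists_unique_twoCycle {β : Type*} [Finite α]
    [LinearOrder β] (w : α → β) (hw : ∀ x, f (f x) ≠ x → w (f x) < w x)
    (c : (fromFun f).ConnectedComponent) :
    ∃ i j, f i = j ∧ f j = i ∧ (fromFun f).connectedComponentMk i = c ∧
      ∀ i' j', f i' = j' → f j' = i' → (fromFun f).connectedComponentMk i' = c →
        (i' = i ∧ j' = j) ∨ (i' = j ∧ j' = i) := by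
  induction c using ConnectedComponent.ind with
  | h x =>
    obtain ⟨z, hz, hxz⟩ := fromFun_exists_reachable_apply_apply_eq w hw x
    refine ⟨z, f z, rfl, hz, ConnectedComponent.sound hxz.symm, ?_⟩
    rintro i' _ rfl hi' hc
    have hzi' := ConnectedComponent.exact (hc.trans (ConnectedComponent.sound hxz))
    rcases fromFun_eq_or_eq_apply_of_reachable hz hi' hzi'.symm with rfl | rfl
    exacts [Or.inl ⟨rfl, rfl⟩, Or.inr ⟨rfl, hz⟩]

end SimpleGraph

theorem dist_apply_apply_lt_of_injOn_dist {P : Type*} [MetricSpace P] {V : Set P}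
    (hdist : ∀ i ∈ V, ∀ j ∈ V, ∀ k ∈ V, ∀ l ∈ V,
      i ≠ j → k ≠ l → dist i j = dist k l → (i = k ∧ j = l) ∨ (i = l ∧ j = k))
    {nn : P → P} (hnn : ∀ i ∈ V, nn i ∈ V ∧ nn i ≠ i ∧ ∀ j ∈ V, j ≠ i → dist i (nn i) ≤ dist i j)
    {x : P} (hx : x ∈ V) (hxx : nn (nn x) ≠ x) :
    dist (nn x) (nn (nn x)) < dist x (nn x) := by
  obtain ⟨hy, hyx, -⟩ := hnn x hx
  obtain ⟨-, hzy, hmin⟩ := hnn (nn x) hy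
  rw [dist_comm x]
  refine (hmin x hx hyx.symm).lt_of_ne fun heq => ?_
  rcases hdist _ hy _ (hnn _ hy).1 _ hy _ hx hzy.symm hyx heq with ⟨-, h⟩ | ⟨h, -⟩
  exacts [hxx h, hyx h]

theorem stmt_5_general (V : Finset (EuclideanSpace ℝ (Fin 2)))
    (hdist : ∀ i ∈ V, ∀ j ∈ V, ∀ k ∈ V, ∀ l ∈ V,
      i ≠ j → k ≠ l → dist i j = dist k l → (i = k ∧ j = l) ∨ (i = l ∧ j = k))
    (nn : EuclideanSpace ℝ (Fin 2) → EuclideanSpace ℝ (Fin 2))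
    (hnn : ∀ i ∈ V, nn i ∈ V ∧ nn i ≠ i ∧
      ∀ j ∈ V, j ≠ i → dist i (nn i) ≤ dist i j) :
    ∀ c : (SimpleGraph.fromRel
        (fun a b : {x // x ∈ V} => nn a.1 = b.1)).ConnectedComponent,
      ∃ i j : {x // x ∈ V},
        nn i.1 = j.1 ∧ nn j.1 = i.1 ∧
        (SimpleGraph.fromRel
          (fun a b : {x // x ∈ V} => nn a.1 = b.1)).connectedComponentMk i = c ∧
        ∀ i' j' : {x // x ∈ V},
          nn i'.1 = j'.1 → nn j'.1 = i'.1 →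
          (SimpleGraph.fromRel
            (fun a b : {x // x ∈ V} => nn a.1 = b.1)).connectedComponentMk i' = c →
          (i' = i ∧ j' = j) ∨ (i' = j ∧ j' = i) := by
  let f (a : {x // x ∈ V}) : {x // x ∈ V} := ⟨nn a, (hnn a a.2).1⟩
  have hf (a b : {x // x ∈ V}) : nn a.1 = b.1 ↔ f a = b :=
    ⟨fun h => Subtype.ext h, congrArg Subtype.val⟩
  have hG : SimpleGraph.fromRel (fun a b : {x // x ∈ V} => nn a.1 = b.1) =
      SimpleGraph.fromFun f := by
    simp only [hf, SimpleGraph.fromFun]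
  rw [hG]
  simp only [hf]
  refine SimpleGraph.fromFun_connectedComponent_exists_unique_twoCycle
    (fun a : {x // x ∈ V} => dist a.1 (nn a.1)) fun a ha => ?_
  exact dist_apply_apply_lt_of_injOn_dist hdist hnn a.2 fun h => ha (Subtype.ext h)

/-- Every weakly connected component of the directed nearest-neighbor graph
contains exactly one mutual nearest-neighbor pair (biroot), unique up to swap. -/
theorem stmt_5 (V : Finset (EuclideanSpace ℝ (Fin 2))) (hV : 2 ≤ V.card)
    (hdist : ∀ i ∈ V, ∀ j ∈ V, ∀ k ∈ V, ∀ l ∈ V,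
      i ≠ j → k ≠ l → dist i j = dist k l → (i = k ∧ j = l) ∨ (i = l ∧ j = k))
    (nn : EuclideanSpace ℝ (Fin 2) → EuclideanSpace ℝ (Fin 2))
    (hnn : ∀ i ∈ V, nn i ∈ V ∧ nn i ≠ i ∧
      ∀ j ∈ V, j ≠ i → dist i (nn i) ≤ dist i j) :
    ∀ c : (SimpleGraph.fromRel
        (fun a b : {x // x ∈ V} => nn a.1 = b.1)).ConnectedComponent,
      ∃ i j : {x // x ∈ V},
        nn i.1 = j.1 ∧ nn j.1 = i.1 ∧
        (SimpleGraph.fromRel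
          (fun a b : {x // x ∈ V} => nn a.1 = b.1)).connectedComponentMk i = c ∧
        ∀ i' j' : {x // x ∈ V},
          nn i'.1 = j'.1 → nn j'.1 = i'.1 →
          (SimpleGraph.fromRel
            (fun a b : {x // x ∈ V} => nn a.1 = b.1)).connectedComponentMk i' = c →
          (i' = i ∧ j' = j) ∨ (i' = j ∧ j' = i) :=
  stmt_5_general V hdist nn hnn
end

section
/- Let V ⊂ ℝ² be finite with pairwise distinct inter-point distances. In the mutual (undirected) nearest-neighbor graph, every vertex has degree at most 6. -/
/-!
If `a ≠ b` are both neighbours of `i` in the nearest-neighbour graph, then `ab` is strictly the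
longest side of the triangle `iab`: with pairwise distinct distances every nearest-neighbour
inequality is strict. By the law of cosines the angle at `i` then exceeds `π / 3`, so each of six
sectors of opening `π / 3` around `i` contains at most one neighbour.
-/

open InnerProductGeometry Real

section NearestNeighbor

variable {P : Type*} [MetricSpace P]

def DistinctDistances (V : Set P) : Prop :=
  ∀ i ∈ V, ∀ j ∈ V, ∀ k ∈ V, ∀ l ∈ V,
    i ≠ j → k ≠ l → dist i j = dist k l → (i = k ∧ j = l) ∨ (i = l ∧ j = k)

def IsNearestNeighborMap (V : Set P) (nn : P → P) : Prop :=
  ∀ i ∈ V, nn i ∈ V ∧ nn i ≠ i ∧ ∀ j ∈ V, j ≠ i → dist i (nn i) ≤ dist i j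

namespace IsNearestNeighborMap

variable {V : Set P} {nn : P → P}

theorem dist_nn_lt (hnn : IsNearestNeighborMap V nn) (hV : DistinctDistances V) {x z : P}
    (hx : x ∈ V) (hz : z ∈ V) (hzx : z ≠ x) (hnz : nn x ≠ z) : dist x (nn x) < dist x z := by
  obtain ⟨hnV, hnx, hle⟩ := hnn x hx
  refine (hle z hz hzx).lt_of_ne fun heq => ?_
  obtain ⟨-, h⟩ | ⟨h, -⟩ := hV x hx (nn x) hnV x hx z hz hnx.symm hzx.symm heq
  exacts [hnz h, hzx h.symm]

theorem dist_lt_dist_of_adj (hnn : IsNearestNeighborMap V nn) (hV : DistinctDistances V)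
    {i a b : P} (hi : i ∈ V) (ha : a ∈ V) (hb : b ∈ V) (hai : a ≠ i) (hbi : b ≠ i)
    (hab : a ≠ b) (hia : nn i = a ∨ nn a = i) (hib : nn i = b ∨ nn b = i) : dist a i < dist a b := by
  rcases hia with rfl | hai'
  · have hbi' : nn b = i := hib.resolve_left hab
    calc dist (nn i) i = dist i (nn i) := dist_comm _ _
      _ < dist i b := hnn.dist_nn_lt hV hi hb hbi hab
      _ = dist b (nn b) := by rw [hbi', dist_comm]
      _ < dist b (nn i) := hnn.dist_nn_lt hV hb ha hab (hbi' ▸ hai.symm)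
      _ = dist (nn i) b := dist_comm _ _
  · simpa only [hai'] using hnn.dist_nn_lt hV ha hb hab.symm (hai' ▸ hbi.symm)

end IsNearestNeighborMap

end NearestNeighbor

theorem InnerProductGeometry.pi_div_three_lt_angle_of_norm_lt_norm_sub
    {E : Type*} [NormedAddCommGroup E] [InnerProductSpace ℝ E] {x y : E}
    (hx : ‖x‖ < ‖x - y‖) (hy : ‖y‖ < ‖x - y‖) : π / 3 < angle x y := by
  have hx0 : 0 < ‖x‖ := norm_pos_iff.2 fun h => by simp [h] at hy
  have hy0 : 0 < ‖y‖ := norm_pos_iff.2 fun h => by simp [h] at hx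
  have hcos : cos (angle x y) < cos (π / 3) := by
    have := norm_sub_sq_eq_norm_sq_add_norm_sq_sub_two_mul_norm_mul_norm_mul_cos_angle x y
    rw [cos_pi_div_three]
    nlinarith [mul_pos hx0 hy0]
  by_contra! h
  exact hcos.not_ge (cos_le_cos_of_nonneg_of_le_pi (angle_nonneg x y) (by linarith [pi_pos]) h)

theorem Complex.angle_eq_abs_arg_sub_arg {x y : ℂ} (hx : x ≠ 0) (hy : y ≠ 0)
    (h : |x.arg - y.arg| < π) : angle x y = |x.arg - y.arg| := by
  obtain ⟨h₁, h₂⟩ := abs_lt.1 h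
  rw [angle_eq_abs_arg hx hy, ← arg_coe_angle_toReal_eq_arg, arg_div_coe_angle hx hy,
    ← Real.Angle.coe_sub, Real.Angle.toReal_coe_eq_self_iff.2 ⟨h₁, h₂.le⟩]

theorem Complex.ncard_le_six_of_pairwise_pi_div_three_lt_angle {S : Set ℂ} (h0 : 0 ∉ S)
    (hS : S.Pairwise fun x y => π / 3 < angle x y) : S.ncard ≤ 6 := by
  -- `-arg z ∈ [-π, π)`, so the floor takes exactly six values; with `arg z` it would take seven.
  let sector : ℂ → ℤ := fun z => ⌊-z.arg / (π / 3)⌋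
  have hmaps : ∀ z ∈ S, sector z ∈ (Finset.Ico (-3 : ℤ) 3 : Set ℤ) := by
    intro z _
    have := neg_pi_lt_arg z
    have := arg_le_pi z
    simp only [Finset.coe_Ico, Set.mem_Ico, sector, Int.le_floor, Int.floor_lt]
    constructor
    · rw [le_div_iff₀ (by positivity)]; push_cast; linarith
    · rw [div_lt_iff₀ (by positivity)]; push_cast; linarith
  have hinj : Set.InjOn sector S := by
    intro x hx y hy hxy
    by_contra hne
    have hpi3 : 0 < π / 3 := by positivity
    have hsub : |x.arg - y.arg| < π / 3 := by
      have := Int.abs_sub_lt_one_of_floor_eq_floor hxy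
      rwa [← sub_div, abs_div, abs_of_pos hpi3, div_lt_one hpi3,
        neg_sub_neg, abs_sub_comm] at this
    have hangle : π / 3 < angle x y := hS hx hy hne
    rw [angle_eq_abs_arg_sub_arg (ne_of_mem_of_not_mem hx h0) (ne_of_mem_of_not_mem hy h0)
      (by linarith [pi_pos])] at hangle
    linarith
  have := Set.ncard_le_ncard_of_injOn sector hmaps hinj (Finset.finite_toSet _)
  rwa [Set.ncard_coe_finset, Int.card_Ico] at this

theorem InnerProductGeometry.ncard_le_six_of_pairwise_pi_div_three_lt_angle {E : Type*}
    [NormedAddCommGroup E] [InnerProductSpace ℝ E] (hE : Module.finrank ℝ E = 2) {S : Set E}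
    (h0 : 0 ∉ S) (hS : S.Pairwise fun x y => π / 3 < angle x y) : S.ncard ≤ 6 := by
  have : FiniteDimensional ℝ E := Module.finite_of_finrank_eq_succ hE
  let e : E ≃ₗᵢ[ℝ] ℂ :=
    (Complex.isometryOfOrthonormal ((stdOrthonormalBasis ℝ E).reindex (finCongr hE))).symm
  rw [← Set.ncard_image_of_injective S e.injective]
  refine Complex.ncard_le_six_of_pairwise_pi_div_three_lt_angle ?_ ?_
  · rintro ⟨z, hz, hz0⟩
    obtain rfl : z = 0 := by simpa using hz0
    exact h0 hz
  · rintro _ ⟨x, hx, rfl⟩ _ ⟨y, hy, rfl⟩ hxy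
    have hmap := e.toLinearIsometry.angle_map x y
    rw [LinearIsometryEquiv.coe_toLinearIsometry] at hmap
    rw [hmap]
    exact hS hx hy (ne_of_apply_ne e hxy)

/-- Every vertex of the undirected nearest-neighbor graph in the plane has degree at most 6. -/
theorem stmt_7 (V : Finset (EuclideanSpace ℝ (Fin 2)))
    (hdist : ∀ i ∈ V, ∀ j ∈ V, ∀ k ∈ V, ∀ l ∈ V,
      i ≠ j → k ≠ l → dist i j = dist k l → (i = k ∧ j = l) ∨ (i = l ∧ j = k))
    (nn : EuclideanSpace ℝ (Fin 2) → EuclideanSpace ℝ (Fin 2))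
    (hnn : ∀ i ∈ V, nn i ∈ V ∧ nn i ≠ i ∧
      ∀ j ∈ V, j ≠ i → dist i (nn i) ≤ dist i j) :
    ∀ i : {x // x ∈ V},
      ((SimpleGraph.fromRel
        (fun a b : {x // x ∈ V} => nn a.1 = b.1)).neighborSet i).ncard ≤ 6 := by
  intro i
  have hnn : IsNearestNeighborMap (V : Set _) nn := hnn
  have hadj : ∀ x ∈ (SimpleGraph.fromRel
      (fun a b : {x // x ∈ V} => nn a.1 = b.1)).neighborSet i,
      x.1 ≠ i.1 ∧ (nn i.1 = x.1 ∨ nn x.1 = i.1) := by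
    rintro x ⟨hix, hx⟩
    exact ⟨fun h => hix (Subtype.ext h.symm), hx⟩
  rw [← Set.ncard_image_of_injective _
    ((sub_left_injective (b := i.1)).comp Subtype.val_injective)]
  refine ncard_le_six_of_pairwise_pi_div_three_lt_angle finrank_euclideanSpace_fin ?_ ?_
  · rintro ⟨x, hx, hx0⟩
    exact (hadj x hx).1 (sub_eq_zero.1 hx0)
  · rintro _ ⟨x, hx, rfl⟩ _ ⟨y, hy, rfl⟩ hxy
    have hxy' : x.1 ≠ y.1 := fun h => hxy (by simp [h])
    obtain ⟨hxi, hix⟩ := hadj x hx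
    obtain ⟨hyi, hiy⟩ := hadj y hy
    apply pi_div_three_lt_angle_of_norm_lt_norm_sub <;>
      simp only [Function.comp_apply, sub_sub_sub_cancel_right, ← dist_eq_norm]
    · exact hnn.dist_lt_dist_of_adj hdist i.2 x.2 y.2 hxi hyi hxy' hix hiy
    · rw [dist_comm x.1]
      exact hnn.dist_lt_dist_of_adj hdist i.2 y.2 x.2 hyi hxi hxy'.symm hiy hix
end

section
/- Let i ∈ V have two distinct NNG-neighbors j and k (i.e., each of j,k is either the nearest neighbor of i or has i as its nearest neighbor). Then the angle ∠(j, i, k) at vertex i is strictly greater than π/3. -/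
open EuclideanGeometry

/-- Two distinct NNG-neighbors of a common vertex subtend an angle greater than π/3. -/
theorem stmt_8 (V : Finset (EuclideanSpace ℝ (Fin 2)))
    (hdist : ∀ i ∈ V, ∀ j ∈ V, ∀ k ∈ V, ∀ l ∈ V,
      i ≠ j → k ≠ l → dist i j = dist k l → (i = k ∧ j = l) ∨ (i = l ∧ j = k))
    (nn : EuclideanSpace ℝ (Fin 2) → EuclideanSpace ℝ (Fin 2))
    (hnn : ∀ i ∈ V, nn i ∈ V ∧ nn i ≠ i ∧
      ∀ j ∈ V, j ≠ i → dist i (nn i) ≤ dist i j)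
    (i j k : EuclideanSpace ℝ (Fin 2)) (hi : i ∈ V) (hj : j ∈ V) (hk : k ∈ V)
    (hij : j ≠ i) (hik : k ≠ i) (hjk : j ≠ k)
    (hedgej : nn i = j ∨ nn j = i) (hedgek : nn i = k ∨ nn k = i) :
    Real.pi / 3 < EuclideanGeometry.angle j i k := by
  have e1 : dist j i = dist i j := dist_comm j i
  have e2 : dist k i = dist i k := dist_comm k i
  have e3 : dist j k = dist k j := dist_comm j k
  -- strictness helpers
  have hne1 : dist j i ≠ dist j k := by
    intro h
    rcases hdist j hj i hi j hj k hk hij hjk h with ⟨_, h2⟩ | ⟨h2, _⟩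
    · exact hik h2.symm
    · exact hjk h2
  have hne2 : dist k i ≠ dist k j := by
    intro h
    rcases hdist k hk i hi k hk j hj hik (Ne.symm hjk) h with ⟨_, h2⟩ | ⟨h2, _⟩
    · exact hij h2.symm
    · exact hjk h2.symm
  -- the opposite side jk is strictly the largest
  have key : dist i j < dist j k ∧ dist i k < dist j k := by
    have cj : nn j = i → dist j i < dist j k := fun h => by
      have := (hnn j hj).2.2 k hk hjk.symm
      rw [h] at this
      exact lt_of_le_of_ne this hne1
    have ck : nn k = i → dist k i < dist k j := fun h => by
      have := (hnn k hk).2.2 j hj hjk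
      rw [h] at this
      exact lt_of_le_of_ne this hne2
    rcases hedgej with h1 | h1
    · rcases hedgek with h2 | h2
      · exact absurd (h1.symm.trans h2) hjk
      · have hkj := ck h2
        have hle : dist i j ≤ dist i k := by
          have := (hnn i hi).2.2 k hk hik
          rwa [h1] at this
        constructor <;> linarith
    · rcases hedgek with h2 | h2
      · have hji := cj h1
        have hle : dist i k ≤ dist i j := by
          have := (hnn i hi).2.2 j hj hij
          rwa [h2] at this
        constructor <;> linarith
      · have hji := cj h1
        have hkj := ck h2
        constructor <;> linarith
  obtain ⟨hca, hcb⟩ := key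
  have ha : (0:ℝ) < dist j i := dist_pos.2 hij
  have hb : (0:ℝ) < dist k i := dist_pos.2 hik
  have hlaw := EuclideanGeometry.law_cos j i k
  rw [← e1] at hca
  rw [← e2] at hcb
  have hcos : Real.cos (EuclideanGeometry.angle j i k) < 1/2 := by
    nlinarith [mul_pos ha hb, mul_pos (sub_pos.2 hca) (sub_pos.2 hcb),
      sq_nonneg (dist j i - dist k i)]
  by_contra h
  push_neg at h
  have h2 : Real.cos (Real.pi / 3) ≤ Real.cos (EuclideanGeometry.angle j i k) :=
    Real.cos_le_cos_of_nonneg_of_le_pi (EuclideanGeometry.angle_nonneg j i k)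
      (by linarith [Real.pi_pos]) h
  rw [Real.cos_pi_div_three] at h2
  linarith
end

section
/- Let f(x,K) = log(1−x²) + 2x²/(K(1−x²)) for 0 ≤ x < 1 and K > 0. Then f(M,K) < 0 whenever K > 2/(1−M²) and 0 < M < 1, and f(M,K) > 0 whenever 0 < K < 2 and 0 < M < 1. -/
noncomputable def f (x K : ℝ) : ℝ :=
  Real.log (1 - x ^ 2) + 2 * x ^ 2 / (K * (1 - x ^ 2))

theorem stmt_9 (M K : ℝ) (hM0 : 0 < M) (hM1 : M < 1) :
    (K > 2 / (1 - M ^ 2) → f M K < 0) ∧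
    (0 < K → K < 2 → f M K > 0) := by
  set t : ℝ := 1 - M ^ 2 with ht
  have hM2 : 0 < M ^ 2 := by positivity
  have hM2' : M ^ 2 < 1 := by nlinarith
  have ht0 : 0 < t := by rw [ht]; linarith
  have ht1 : t < 1 := by rw [ht]; linarith
  have hlog : Real.log t < t - 1 := Real.log_lt_sub_one_of_pos ht0 (ne_of_lt ht1)
  have hlog2 : 1 - 1 / t < Real.log t := by
    have h1 : Real.log (1 / t) < 1 / t - 1 :=
      Real.log_lt_sub_one_of_pos (by positivity) (by
        intro h
        have : t = 1 := by field_simp at h; linarith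
        linarith)
    rw [one_div, Real.log_inv] at h1
    rw [one_div]
    linarith [h1]
  constructor
  · intro hK
    have hKt : 2 < K * t := (div_lt_iff₀ ht0).mp hK
    have h2 : 2 * M ^ 2 / (K * t) < 2 * M ^ 2 / 2 :=
      div_lt_div_of_pos_left (by positivity) (by norm_num) hKt
    have h3 : 2 * M ^ 2 / 2 = M ^ 2 := by ring
    have : f M K = Real.log t + 2 * M ^ 2 / (K * t) := rfl
    rw [this]
    have hM2t : M ^ 2 = 1 - t := by simp [ht]
    nlinarith [h2]
  · intro hK0 hK2
    have hKt0 : 0 < K * t := by positivity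
    have hKt : K * t < 2 * t := by nlinarith
    have h2 : 2 * M ^ 2 / (2 * t) < 2 * M ^ 2 / (K * t) :=
      div_lt_div_of_pos_left (by positivity) hKt0 hKt
    have hM2t : M ^ 2 = 1 - t := by simp [ht]
    have h3 : 2 * M ^ 2 / (2 * t) = 1 / t - 1 := by
      rw [hM2t]; field_simp
    have : f M K = Real.log t + 2 * M ^ 2 / (K * t) := rfl
    rw [this]
    nlinarith [h2]
end

section
/- With f(x,K) = log(1−x²) + 2x²/(K(1−x²)), constants K > 0, 0 ≤ M < 1, ω = 4π/3 + √3/2, and constant correlation g ≡ M, the quantity D(K,M) = (1/2)[log K + 1/K − 1 + (1 − π/(2ω))·f(M,K)] satisfies: D(K,0) = (1/2)(log K + 1/K − 1); and for fixed 0 < M < 1, D(K,M) > D(K,0) for 0 < K < 2 and D(K,M) < D(K,0) for K > 2/(1−M²). -/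
/-- Error exponent with constant correlation M, ω = 4π/3 + √3/2. -/
noncomputable def Dconst (K M : ℝ) : ℝ :=
  (1 / 2) * (Real.log K + 1 / K - 1 +
    (1 - Real.pi / (2 * (4 * Real.pi / 3 + Real.sqrt 3 / 2))) * f M K)

lemma cpos : 0 < 1 - Real.pi / (2 * (4 * Real.pi / 3 + Real.sqrt 3 / 2)) := by
  have hπ := Real.pi_pos
  have hs : (0:ℝ) < Real.sqrt 3 := Real.sqrt_pos.mpr (by norm_num)
  have hω : (0:ℝ) < 2 * (4 * Real.pi / 3 + Real.sqrt 3 / 2) := by nlinarith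
  have : Real.pi < 2 * (4 * Real.pi / 3 + Real.sqrt 3 / 2) := by nlinarith
  have := (div_lt_one hω).mpr this
  linarith

theorem stmt_19 :
    (∀ K : ℝ, 0 < K → Dconst K 0 = (1 / 2) * (Real.log K + 1 / K - 1)) ∧
    (∀ M : ℝ, 0 < M → M < 1 →
      (∀ K : ℝ, 0 < K → K < 2 → Dconst K 0 < Dconst K M) ∧
      (∀ K : ℝ, 2 / (1 - M ^ 2) < K → Dconst K M < Dconst K 0)) := by
  have hzero : ∀ K : ℝ, f 0 K = 0 := by
    intro K; simp [f]
  constructor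
  · intro K _
    simp [Dconst, hzero]
  · intro M hM0 hM1
    set y : ℝ := 1 - M ^ 2 with hy
    have hy0 : 0 < y := by nlinarith
    have hy1 : y < 1 := by nlinarith
    have hM2 : M ^ 2 = 1 - y := by ring
    have hlogub : Real.log y < y - 1 :=
      Real.log_lt_sub_one_of_pos hy0 (by linarith)
    have hloglb : 1 - 1 / y < Real.log y := by
      have := Real.log_lt_sub_one_of_pos (x := 1 / y) (by positivity) (by
        intro h; rw [div_eq_one_iff_eq (ne_of_gt hy0)] at h; linarith)
      rw [Real.log_div one_ne_zero (ne_of_gt hy0), Real.log_one] at this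
      linarith
    have hc := cpos
    constructor
    · intro K hK hK2
      have hf : 0 < f M K := by
        have h1 : f M K = Real.log y + 2 * (1 - y) / (K * y) := by
          rw [f, ← hy, hM2]
        have h2 : (1 - y) / y ≤ 2 * (1 - y) / (K * y) := by
          rw [div_le_div_iff₀ hy0 (by positivity)]
          nlinarith [mul_pos (mul_pos hy0 (show (0:ℝ) < 1 - y by linarith))
            (show (0:ℝ) < 2 - K by linarith)]
        have h3 : (1 - y) / y = 1 / y - 1 := by field_simp
        rw [h1]; rw [h3] at h2; linarith
      have : Dconst K M - Dconst K 0 =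
          (1 / 2) * ((1 - Real.pi / (2 * (4 * Real.pi / 3 + Real.sqrt 3 / 2))) * f M K) := by
        simp [Dconst, hzero]; ring
      nlinarith
    · intro K hK
      have hK0 : 0 < K := lt_trans (by positivity) hK
      have hKy : 2 < K * y := by
        rw [div_lt_iff₀ hy0] at hK; linarith
      have hf : f M K < 0 := by
        have h1 : f M K = Real.log y + 2 * (1 - y) / (K * y) := by
          rw [f, ← hy, hM2]
        have h2 : 2 * (1 - y) / (K * y) ≤ 1 - y := by
          rw [div_le_iff₀ (by positivity)]
          nlinarith
        rw [h1]; linarith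
      have : Dconst K 0 - Dconst K M =
          (1 / 2) * ((1 - Real.pi / (2 * (4 * Real.pi / 3 + Real.sqrt 3 / 2))) * (- f M K)) := by
        simp [Dconst, hzero]; ring
      nlinarith
end
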